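/- Elliott's approximate intertwining (one-sided consequence): let A and B be separable C*-algebras and φ : A → B, ψ : B → A *-homomorphisms such that ψ ∘ φ is approximately unitarily equivalent to id_A and φ ∘ ψ is approximately unitarily equivalent to id_B (via unitaries in the unitizations). Then A and B are isomorphic as C*-algebras; moreover φ is approximately unitarily equivalent to an isomorphism. -/

import Mathlib

/-!
Write `Ad u` for conjugation by a unitary `u` of the unitization. A conjugate `Ad z ∘ ψ` inside
`φ ∘ Ad z ∘ ψ` can be absorbed into the outer unitary, since `φ ∘ Ad z = Ad (φ†(z)) ∘ φ`, so the
hypotheses let one choose unitaries `uₖ`, `vₖ` recursively such that in the diagram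
`A → B → A → B → ⋯` with maps `φₖ = Ad uₖ ∘ φ` and `ψₖ = Ad vₖ ∘ ψ` every triangle commutes up to
`2⁻ᵏ` on the first `k` terms of dense sequences of `A` and `B` and on their images. All maps are
contractive, so `φₖ x` and `ψₖ y` converge for every `x` and `y`; the limits are mutually inverse
*-homomorphisms, and the unitaries `uₖ` witness that `φ` is approximately unitarily equivalent to
the limit of the `φₖ`.
-/

open Filter Topology

/-- Approximate unitary equivalence of maps `A → B`, witnessed by a sequence of unitaries in
the minimal unitization `B† = Unitization ℂ B` of `B`. -/
def ApproxUnitarilyEquiv {A B : Type*} [NonUnitalCStarAlgebra A] [NonUnitalCStarAlgebra B]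
    (φ ψ : A → B) : Prop :=
  ∃ u : ℕ → unitary (Unitization ℂ B), ∀ a : A,
    Tendsto (fun n => ‖(u n : Unitization ℂ B) * (φ a : Unitization ℂ B) * star (u n : Unitization ℂ B)
      - (ψ a : Unitization ℂ B)‖) atTop (𝓝 0)

section Metric

variable {X Y : Type*} [PseudoMetricSpace X] [PseudoMetricSpace Y]

theorem tendsto_apply_of_lipschitzWith {ι : Type*} {l : Filter ι} {g : ι → X → Y} {G : X → Y}
    {x : ι → X} {x₀ : X} (hg : ∀ i, LipschitzWith 1 (g i))
    (hG : Tendsto (g · x₀) l (𝓝 (G x₀))) (hx : Tendsto x l (𝓝 x₀)) :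
    Tendsto (fun i => g i (x i)) l (𝓝 (G x₀)) := by
  rw [tendsto_iff_dist_tendsto_zero] at hG hx ⊢
  refine squeeze_zero (fun _ => dist_nonneg) (fun i => ?_) (by simpa using hx.add hG)
  calc dist (g i (x i)) (G x₀) ≤ dist (g i (x i)) (g i x₀) + dist (g i x₀) (G x₀) :=
        dist_triangle _ _ _
    _ ≤ dist (x i) x₀ + dist (g i x₀) (G x₀) := by
        gcongr; simpa using (hg i).dist_le_mul (x i) x₀

theorem cauchySeq_apply_of_denseRange {ι : Type*} {f : ℕ → X → Y} (hf : ∀ k, LipschitzWith 1 (f k))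
    {a : ι → X} (ha : DenseRange a) (h : ∀ i, CauchySeq (f · (a i))) (x : X) :
    CauchySeq (f · x) := by
  refine Metric.cauchySeq_iff'.2 fun δ hδ => ?_
  obtain ⟨i, hi⟩ := ha.exists_dist_lt x (show 0 < δ / 3 by positivity)
  obtain ⟨N, hN⟩ := Metric.cauchySeq_iff'.1 (h i) (δ / 3) (by positivity)
  refine ⟨N, fun n hn => ?_⟩
  have hclose : ∀ k, dist (f k x) (f k (a i)) < δ / 3 := fun k =>
    ((hf k).dist_le_mul x (a i)).trans_lt (by simpa using hi)
  calc dist (f n x) (f N x)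
      ≤ dist (f n x) (f n (a i)) + dist (f n (a i)) (f N (a i)) + dist (f N (a i)) (f N x) :=
        dist_triangle4 _ _ _ _
    _ < δ / 3 + δ / 3 + δ / 3 := by
        gcongr
        · exact hclose n
        · exact hN n hn
        · rw [dist_comm]; exact hclose N
    _ = δ := by ring

/-- Along the diagram `X →f₀ Y →g₀ X →f₁ Y →g₁ ⋯`, the triangles starting at `x` and at `f k x`
commute up to `ε k` from some stage on. -/
def IsApproxIntertwining (f : ℕ → X → Y) (g : ℕ → Y → X) (ε : ℕ → ℝ) (x : X) : Prop :=
  ∀ᶠ k in atTop, dist (g k (f k x)) x ≤ ε k ∧ dist (f (k + 1) (g k (f k x))) (f k x) ≤ ε k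

namespace IsApproxIntertwining

variable {f : ℕ → X → Y} {g : ℕ → Y → X} {ε : ℕ → ℝ} {x : X}

theorem cauchySeq (h : IsApproxIntertwining f g ε x) (hf : ∀ k, LipschitzWith 1 (f k))
    (hε : Summable ε) : CauchySeq (f · x) := by
  obtain ⟨N, hN⟩ := eventually_atTop.1 h
  rw [← cauchySeq_shift N]
  refine cauchySeq_of_dist_le_of_summable (fun k => 2 * ε (k + N)) (fun k => ?_)
    (((summable_nat_add_iff N).2 hε).mul_left 2)
  obtain ⟨hgf, hfgf⟩ := hN (k + N) (Nat.le_add_left N k)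
  set y := g (k + N) (f (k + N) x)
  calc dist (f (k + N) x) (f (k + 1 + N) x) = dist (f (k + N + 1) x) (f (k + N) x) := by
        rw [dist_comm, Nat.add_right_comm]
    _ ≤ dist (f (k + N + 1) x) (f (k + N + 1) y) + dist (f (k + N + 1) y) (f (k + N) x) :=
        dist_triangle _ _ _
    _ ≤ dist x y + ε (k + N) :=
        add_le_add (by simpa using (hf (k + N + 1)).dist_le_mul x y) hfgf
    _ ≤ 2 * ε (k + N) := by
        rw [dist_comm] at hgf; linarith

theorem tendsto_comp (h : IsApproxIntertwining f g ε x) (hε : Tendsto ε atTop (𝓝 0)) :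
    Tendsto (fun k => g k (f k x)) atTop (𝓝 x) :=
  tendsto_iff_dist_tendsto_zero.2 <|
    squeeze_zero' (.of_forall fun _ => dist_nonneg) (h.mono fun _ hk => hk.1) hε

theorem apply_apply_eq_of_tendsto [T2Space X] (h : IsApproxIntertwining f g ε x)
    (hε : Tendsto ε atTop (𝓝 0)) (hg : ∀ k, LipschitzWith 1 (g k)) {F : X → Y} {G : Y → X}
    (hF : Tendsto (f · x) atTop (𝓝 (F x))) (hG : Tendsto (g · (F x)) atTop (𝓝 (G (F x)))) : G (F x) = x :=
  tendsto_nhds_unique (tendsto_apply_of_lipschitzWith hg hG hF) (h.tendsto_comp hε)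

end IsApproxIntertwining

end Metric

section PointwiseLimits

variable {ι R A B : Type*} {l : Filter ι} [CommSemiring R]
  [NonUnitalNonAssocSemiring A] [Module R A] [Star A]
  [NonUnitalNonAssocSemiring B] [Module R B] [Star B] [TopologicalSpace B] [T2Space B]
  [ContinuousAdd B] [ContinuousMul B] [ContinuousStar B] [ContinuousConstSMul R B]

def nonUnitalStarAlgHomOfTendsto (f : A → B) (g : ι → A →⋆ₙₐ[R] B) [l.NeBot]
    (h : Tendsto (fun i x => g i x) l (𝓝 f)) : A →⋆ₙₐ[R] B :=
  have hg (a : A) := tendsto_pi_nhds.1 h a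
  { toFun := f
    map_smul' c a := tendsto_nhds_unique (hg (c • a)) (by simpa using (hg a).const_smul c)
    map_zero' := tendsto_nhds_unique (hg 0) (by simp)
    map_add' a b := tendsto_nhds_unique (hg (a + b)) (by simpa using (hg a).add (hg b))
    map_mul' a b := tendsto_nhds_unique (hg (a * b)) (by simpa using (hg a).mul (hg b))
    map_star' a := tendsto_nhds_unique (hg (star a)) (by simp only [map_star]; exact (hg a).star) }

end PointwiseLimits

theorem NonUnitalStarAlgHom.lipschitzWith_one {A B : Type*} [NonUnitalCStarAlgebra A]
    [NonUnitalCStarAlgebra B] (φ : A →⋆ₙₐ[ℂ] B) : LipschitzWith 1 φ :=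
  AddMonoidHomClass.lipschitz_of_bound_nnnorm φ 1 fun a => by simpa using nnnorm_apply_le φ a

theorem exists_starAlgEquiv_of_isApproxIntertwining {A B : Type*} [NonUnitalCStarAlgebra A]
    [NonUnitalCStarAlgebra B] (f : ℕ → A →⋆ₙₐ[ℂ] B) (g : ℕ → B →⋆ₙₐ[ℂ] A) {ε : ℕ → ℝ}
    (hε : Summable ε) {a : ℕ → A} (ha : DenseRange a) {b : ℕ → B} (hb : DenseRange b)
    (hfg : ∀ i, IsApproxIntertwining (fun k => f k) (fun k => g k) ε (a i))
    (hgf : ∀ i, IsApproxIntertwining (fun k => g k) (fun k => f (k + 1)) ε (b i)) :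
    ∃ e : A ≃⋆ₐ[ℂ] B, ∀ x, Tendsto (f · x) atTop (𝓝 (e x)) := by
  have hf k := (f k).lipschitzWith_one
  have hg k := (g k).lipschitzWith_one
  choose F hF using fun x => cauchySeq_tendsto_of_complete
    (cauchySeq_apply_of_denseRange hf ha (fun i => (hfg i).cauchySeq hf hε) x)
  choose G hG using fun y => cauchySeq_tendsto_of_complete
    (cauchySeq_apply_of_denseRange hg hb (fun i => (hgf i).cauchySeq hg hε) y)
  let Φ := nonUnitalStarAlgHomOfTendsto F f (tendsto_pi_nhds.2 hF)
  let Ψ := nonUnitalStarAlgHomOfTendsto G g (tendsto_pi_nhds.2 hG)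
  have hΨΦ : ⇑Ψ ∘ ⇑Φ = id := by
    refine (Ψ.lipschitzWith_one.continuous.comp Φ.lipschitzWith_one.continuous).ext_on ha
      continuous_id (Set.eqOn_range.2 (funext fun i => ?_))
    exact (hfg i).apply_apply_eq_of_tendsto hε.tendsto_atTop_zero hg (hF _) (hG _)
  have hΦΨ : ⇑Φ ∘ ⇑Ψ = id := by
    refine (Φ.lipschitzWith_one.continuous.comp Ψ.lipschitzWith_one.continuous).ext_on hb
      continuous_id (Set.eqOn_range.2 (funext fun i => ?_))
    exact (hgf i).apply_apply_eq_of_tendsto hε.tendsto_atTop_zero (fun k => hf (k + 1)) (hG _)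
      ((hF _).comp (tendsto_add_atTop_nat 1))
  exact ⟨.ofBijective Φ (Function.bijective_iff_has_inverse.2 ⟨Ψ, congrFun hΨΦ, congrFun hΦΨ⟩),
    hF⟩

section UnitaryConj

variable {R B : Type*} [CommSemiring R] [StarRing R] [NonUnitalSemiring B] [StarRing B]
  [Module R B] [IsScalarTower R B B] [SMulCommClass R B B] [StarModule R B]

theorem Unitization.inr_snd_conjStarAlgAut_inr (u : unitary (Unitization R B)) (b : B) :
    ((Unitary.conjStarAlgAut R _ u (b : Unitization R B)).snd : Unitization R B) =
      Unitary.conjStarAlgAut R _ u (b : Unitization R B) := by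
  ext <;> simp

def unitaryConj (u : unitary (Unitization R B)) : B →⋆ₙₐ[R] B where
  toFun b := (Unitary.conjStarAlgAut R _ u (b : Unitization R B)).snd
  map_smul' c b := Unitization.inr_injective (R := R) <| by
    simp only [Unitization.inr_snd_conjStarAlgAut_inr]
    simp only [Unitization.inr_smul, Unitization.inr_snd_conjStarAlgAut_inr, map_smul,
      MonoidHom.id_apply]
  map_zero' := by simp
  map_add' b c := Unitization.inr_injective (R := R) <| by
    simp only [Unitization.inr_snd_conjStarAlgAut_inr]
    simp only [Unitization.inr_add, Unitization.inr_snd_conjStarAlgAut_inr, map_add]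
  map_mul' b c := Unitization.inr_injective (R := R) <| by
    simp only [Unitization.inr_snd_conjStarAlgAut_inr]
    simp only [Unitization.inr_mul, Unitization.inr_snd_conjStarAlgAut_inr, map_mul]
  map_star' b := Unitization.inr_injective (R := R) <| by
    simp only [Unitization.inr_snd_conjStarAlgAut_inr]
    simp only [Unitization.inr_star, Unitization.inr_snd_conjStarAlgAut_inr, map_star]

theorem inr_unitaryConj (u : unitary (Unitization R B)) (b : B) :
    (unitaryConj u b : Unitization R B) = u * b * star (u : Unitization R B) :=
  Unitization.inr_snd_conjStarAlgAut_inr u b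

variable {A : Type*} [NonUnitalSemiring A] [StarRing A] [Module R A] [IsScalarTower R A A]
  [SMulCommClass R A A] [StarModule R A]

theorem unitaryConj_map_unitaryConj (φ : A →⋆ₙₐ[R] B) (w : unitary (Unitization R B))
    (z : unitary (Unitization R A)) (a : A) :
    unitaryConj w (φ (unitaryConj z a)) =
      unitaryConj (w * Unitary.map (.ofClass (Unitization.starMap φ)) z) (φ a) := by
  apply Unitization.inr_injective (R := R)
  rw [inr_unitaryConj, inr_unitaryConj, ← Unitization.starMap_inr, inr_unitaryConj]
  simp only [map_mul, map_star, Unitization.starMap_inr, MulMemClass.coe_mul, Unitary.coe_map,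
    star_mul, mul_assoc]
  rfl

end UnitaryConj

section ApproxUnitarilyEquiv

variable {A B C : Type*} [NonUnitalCStarAlgebra A] [NonUnitalCStarAlgebra B]
  [NonUnitalCStarAlgebra C]

theorem approxUnitarilyEquiv_iff {f g : A → B} :
    ApproxUnitarilyEquiv f g ↔ ∃ u : ℕ → unitary (Unitization ℂ B),
      ∀ a, Tendsto (fun n => unitaryConj (u n) (f a)) atTop (𝓝 (g a)) := by
  have hnorm (u : unitary (Unitization ℂ B)) (a : A) :
      ‖(u : Unitization ℂ B) * (f a : Unitization ℂ B) * star (u : Unitization ℂ B) -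
        (g a : Unitization ℂ B)‖ = ‖unitaryConj u (f a) - g a‖ := by
    rw [← inr_unitaryConj, ← Unitization.inr_sub ℂ, Unitization.norm_inr]
  simp only [ApproxUnitarilyEquiv, hnorm, ← tendsto_iff_norm_sub_tendsto_zero]

theorem ApproxUnitarilyEquiv.comp_unitaryConj {φ : A →⋆ₙₐ[ℂ] B} {g : C → A} {h : C → B}
    (hφ : ApproxUnitarilyEquiv (⇑φ ∘ g) h) (z : unitary (Unitization ℂ A)) :
    ApproxUnitarilyEquiv (⇑φ ∘ ⇑(unitaryConj z) ∘ g) h := by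
  obtain ⟨u, hu⟩ := approxUnitarilyEquiv_iff.1 hφ
  refine approxUnitarilyEquiv_iff.2
    ⟨fun n => u n * (Unitary.map (.ofClass (Unitization.starMap φ)) z)⁻¹, fun c => ?_⟩
  simpa [unitaryConj_map_unitaryConj] using hu c

theorem ApproxUnitarilyEquiv.exists_forall_dist_le {f g : A → B} (h : ApproxUnitarilyEquiv f g)
    {Y : Set A} (hY : Y.Finite) {δ : ℝ} (hδ : 0 < δ) :
    ∃ u : unitary (Unitization ℂ B), ∀ y ∈ Y, dist (unitaryConj u (f y)) (g y) ≤ δ := by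
  obtain ⟨u, hu⟩ := approxUnitarilyEquiv_iff.1 h
  obtain ⟨n, hn⟩ := (hY.eventually_all.2 fun y _ =>
    (hu y).eventually (Metric.closedBall_mem_nhds _ hδ)).exists
  exact ⟨u n, hn⟩

end ApproxUnitarilyEquiv

section Construction

variable {A B : Type*} [NonUnitalCStarAlgebra A] [NonUnitalCStarAlgebra B]
  (φ : A →⋆ₙₐ[ℂ] B) (ψ : B →⋆ₙₐ[ℂ] A)

theorem exists_unitaries_approxIntertwining_step
    (h₁ : ApproxUnitarilyEquiv (⇑ψ ∘ ⇑φ) id) (h₂ : ApproxUnitarilyEquiv (⇑φ ∘ ⇑ψ) id)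
    (a : ℕ → A) (b : ℕ → B) (n : ℕ) {δ : ℝ} (hδ : 0 < δ)
    (u : unitary (Unitization ℂ B)) (v : unitary (Unitization ℂ A)) :
    ∃ (u' : unitary (Unitization ℂ B)) (v' : unitary (Unitization ℂ A)), ∀ i ≤ n,
      dist (unitaryConj u' (φ (unitaryConj v (ψ (b i))))) (b i) ≤ δ ∧
      dist (unitaryConj u' (φ (unitaryConj v (ψ (unitaryConj u (φ (a i)))))))
        (unitaryConj u (φ (a i))) ≤ δ ∧
      dist (unitaryConj v' (ψ (unitaryConj u' (φ (a i))))) (a i) ≤ δ ∧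
      dist (unitaryConj v' (ψ (unitaryConj u' (φ (unitaryConj v (ψ (b i)))))))
        (unitaryConj v (ψ (b i))) ≤ δ := by
  obtain ⟨u', hu'⟩ := (h₂.comp_unitaryConj v).exists_forall_dist_le
    (((Set.finite_Iic n).image b).union ((Set.finite_Iic n).image (unitaryConj u ∘ φ ∘ a))) hδ
  obtain ⟨v', hv'⟩ := (h₁.comp_unitaryConj u').exists_forall_dist_le
    (((Set.finite_Iic n).image a).union ((Set.finite_Iic n).image (unitaryConj v ∘ ψ ∘ b))) hδ
  exact ⟨u', v', fun i hi => ⟨hu' _ (.inl ⟨i, hi, rfl⟩), hu' _ (.inr ⟨i, hi, rfl⟩),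
    hv' _ (.inl ⟨i, hi, rfl⟩), hv' _ (.inr ⟨i, hi, rfl⟩)⟩⟩

theorem exists_unitaries_isApproxIntertwining
    (h₁ : ApproxUnitarilyEquiv (⇑ψ ∘ ⇑φ) id) (h₂ : ApproxUnitarilyEquiv (⇑φ ∘ ⇑ψ) id)
    (a : ℕ → A) (b : ℕ → B) :
    ∃ (u : ℕ → unitary (Unitization ℂ B)) (v : ℕ → unitary (Unitization ℂ A)),
      (∀ i, IsApproxIntertwining (fun k => (unitaryConj (u k)).comp φ)
        (fun k => (unitaryConj (v k)).comp ψ) (fun k => (1 / 2 : ℝ) ^ k) (a i)) ∧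
      ∀ i, IsApproxIntertwining (fun k => (unitaryConj (v k)).comp ψ)
        (fun k => (unitaryConj (u (k + 1))).comp φ) (fun k => (1 / 2 : ℝ) ^ k) (b i) := by
  choose u' v' huv using fun k (p : unitary (Unitization ℂ B) × unitary (Unitization ℂ A)) =>
    exists_unitaries_approxIntertwining_step φ ψ h₁ h₂ a b k (δ := (1 / 2 : ℝ) ^ (k + 1))
      (by positivity) p.1 p.2
  let c : ℕ → unitary (Unitization ℂ B) × unitary (Unitization ℂ A) :=
    fun n => Nat.rec (1, 1) (fun k p => (u' k p, v' k p)) n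
  have hhalf (k : ℕ) : (1 / 2 : ℝ) ^ (k + 1) ≤ (1 / 2) ^ k :=
    pow_le_pow_of_le_one (by norm_num) (by norm_num) k.le_succ
  refine ⟨fun k => (c k).1, fun k => (c k).2, fun i => ?_, fun i => ?_⟩
  · filter_upwards [eventually_gt_atTop i] with k hk
    obtain ⟨j, rfl⟩ : ∃ j, k = j + 1 := Nat.exists_eq_add_one_of_ne_zero (by omega)
    exact ⟨(huv j (c j) i (by omega)).2.2.1,
      (huv (j + 1) (c (j + 1)) i hk.le).2.1.trans (hhalf _)⟩
  · filter_upwards [eventually_ge_atTop i] with k hk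
    exact ⟨(huv k (c k) i hk).1.trans (hhalf k), (huv k (c k) i hk).2.2.2.trans (hhalf k)⟩

end Construction

/-- Elliott's two-sided intertwining: if `ψ ∘ φ ≈_u id_A` and `φ ∘ ψ ≈_u id_B` for separable
C*-algebras `A`, `B`, then `A ≅ B`; moreover `φ` is approximately unitarily equivalent to an
isomorphism. -/
theorem elliott_intertwining {A B : Type*}
    [NonUnitalCStarAlgebra A] [NonUnitalCStarAlgebra B]
    [TopologicalSpace.SeparableSpace A] [TopologicalSpace.SeparableSpace B]
    (φ : A →⋆ₙₐ[ℂ] B) (ψ : B →⋆ₙₐ[ℂ] A)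
    (h₁ : ApproxUnitarilyEquiv (⇑ψ ∘ ⇑φ) (id : A → A))
    (h₂ : ApproxUnitarilyEquiv (⇑φ ∘ ⇑ψ) (id : B → B)) :
    ∃ e : A ≃⋆ₐ[ℂ] B, ApproxUnitarilyEquiv ⇑φ ⇑e := by
  obtain ⟨u, v, hA, hB⟩ := exists_unitaries_isApproxIntertwining φ ψ h₁ h₂
    (TopologicalSpace.denseSeq A) (TopologicalSpace.denseSeq B)
  obtain ⟨e, he⟩ := exists_starAlgEquiv_of_isApproxIntertwining _ _ summable_geometric_two
    (TopologicalSpace.denseRange_denseSeq A) (TopologicalSpace.denseRange_denseSeq B) hA hB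
  exact ⟨e, approxUnitarilyEquiv_iff.2 ⟨u, he⟩⟩
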